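/- Small-m energy comparison: for d ≥ 3, q > 1, with r_*, r^*, φ as in the radial example, if m > 0 satisfies m² < ((r^*)^{2−d} − 1)/(d−2) · ∫_{r_*}^{r^*} (ρ − r_*)^{−1/q} ρ^{d−1} dρ, then the radial competitor u_{r^*} (equal 0 in B_{r^*}, harmonic in the annulus, equal m on ∂B₁) has strictly smaller energy J(u_{r^*}) < J(m) = ∫_{B₁} φ dx than the constant function m, where J(v) = ∫_{B₁}(|∇v|² + φ·1_{v>0}) dx. -/

import Mathlib

/-!
Both energies are integrals of radial functions over `B₁`, so polar coordinates turn them into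
integrals over `(0, 1)` with weight `ρ ^ (d - 1)`. Outside `B_r` the competitor `u_r` is positive
with `|∇u_r| = c ρ ^ (1 - d)`, `c = m (d - 2) / (r ^ (2 - d) - 1)`, so its Dirichlet energy is
`c² ∫_r^1 ρ ^ (1 - d) dρ = m² (d - 2) / (r ^ (2 - d) - 1)`, while it saves the `φ`-energy of `B_r`.
Hence `J(m) - J(u_r)` is a positive multiple of
`∫_0^r φ ρ ^ (d - 1) dρ - m² (d - 2) / (r ^ (2 - d) - 1)`, and for `r = r^*` the integral is at
least its singular part over `[r_*, r^*]`, which the hypothesis on `m` makes large enough.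
-/

open MeasureTheory Metric Set intervalIntegral

/-- `r_* = (1/(d-1))^{1/(d-2)}`. -/
noncomputable def rStar (d : ℕ) : ℝ := ((d : ℝ) - 1)⁻¹ ^ (((d : ℝ) - 2)⁻¹)

/-- `r^* = (1 + r_*)/2`. -/
noncomputable def rStarUp (d : ℕ) : ℝ := (1 + rStar d) / 2

/-- The radial profile of the Bernoulli function in the example. -/
noncomputable def phiRad (d : ℕ) (q m : ℝ) (ρ : ℝ) : ℝ :=
  if ρ < rStar d then (m * rStar d ^ (d - 1)) ^ 2
  else if ρ < rStarUp d then (ρ - rStar d) ^ (-(1 : ℝ) / q)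
  else (m * rStar d ^ (d - 1)) ^ 2

/-- The radial competitor: `0` in `B_r`, harmonic in the annulus, `m` on `∂B₁`. -/
noncomputable def urad (d : ℕ) (m r : ℝ) (x : EuclideanSpace ℝ (Fin d)) : ℝ :=
  if ‖x‖ < r then 0
  else m * (r ^ ((2 : ℝ) - d) - ‖x‖ ^ ((2 : ℝ) - d)) / (r ^ ((2 : ℝ) - d) - 1)


open Filter Topology

section Radial

variable {E : Type*} [NormedAddCommGroup E] [InnerProductSpace ℝ E]

theorem hasFDerivAt_norm_of_ne_zero {x : E} (hx : x ≠ 0) :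
    HasFDerivAt (fun y : E => ‖y‖) (‖x‖⁻¹ • innerSL ℝ x) x := by
  have h := (hasStrictFDerivAt_norm_sq x).hasFDerivAt.sqrt (by positivity)
  simp only [Real.sqrt_sq (norm_nonneg _)] at h
  convert h using 1
  ext y
  simp only [smul_apply, coe_innerSL_apply, smul_eq_mul, one_div,
    mul_inv_rev, nsmul_eq_mul, Nat.cast_ofNat]
  field_simp

theorem HasDerivAt.hasGradientAt_comp_norm [CompleteSpace E] {g : ℝ → ℝ} {g' : ℝ} {x : E}
    (hx : x ≠ 0) (hg : HasDerivAt g g' ‖x‖) :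
    HasGradientAt (fun y => g ‖y‖) ((g' / ‖x‖) • x) x := by
  rw [hasGradientAt_iff_hasFDerivAt]
  refine (hg.comp_hasFDerivAt x (hasFDerivAt_norm_of_ne_zero hx)).congr_fderiv ?_
  ext y
  simp [div_eq_mul_inv, mul_assoc]

theorem norm_gradient_comp_norm [CompleteSpace E] {g : ℝ → ℝ} {g' : ℝ} {x : E}
    (hx : x ≠ 0) (hg : HasDerivAt g g' ‖x‖) :
    ‖gradient (fun y => g ‖y‖) x‖ = |g'| := by
  rw [(hg.hasGradientAt_comp_norm hx).gradient, norm_smul, Real.norm_eq_abs, abs_div, abs_norm,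
    div_mul_cancel₀ _ (norm_ne_zero_iff.2 hx)]

end Radial

section Polar

variable {E F : Type*} [NormedAddCommGroup E] [NormedSpace ℝ E] [FiniteDimensional ℝ E]
  [MeasurableSpace E] [BorelSpace E] [Nontrivial E] (μ : Measure E) [μ.IsAddHaarMeasure]
  [NormedAddCommGroup F] [NormedSpace ℝ F]

theorem setIntegral_ball_fun_norm_addHaar (f : ℝ → F) {R : ℝ} (hR : 0 ≤ R) :
    ∫ x in ball (0 : E) R, f ‖x‖ ∂μ =
      Module.finrank ℝ E • μ.real (ball 0 1) •
        ∫ y in 0..R, y ^ (Module.finrank ℝ E - 1) • f y := by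
  have hball :
      ∫ x in ball (0 : E) R, f ‖x‖ ∂μ = ∫ x, (Iio R).indicator f ‖x‖ ∂μ := by
    rw [← MeasureTheory.integral_indicator measurableSet_ball]
    congr 1
    ext x
    simp [indicator]
  have hIoi : ∫ y in Ioi (0 : ℝ), y ^ (Module.finrank ℝ E - 1) • (Iio R).indicator f y =
      ∫ y in Ioo 0 R, y ^ (Module.finrank ℝ E - 1) • f y := by
    rw [← Ioi_inter_Iio, ← setIntegral_indicator measurableSet_Iio]
    congr 1
    ext y
    by_cases hy : y < R <;> simp [hy]
  rw [hball, integral_fun_norm_addHaar, hIoi, integral_of_le hR, integral_Ioc_eq_integral_Ioo]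

end Polar

theorem intervalIntegrable_sub_rpow_mul_pow {p : ℝ} (hp : -1 < p) (s b : ℝ) (n : ℕ) :
    IntervalIntegrable (fun ρ : ℝ => (ρ - s) ^ p * ρ ^ n) volume s b := by
  have h := (intervalIntegrable_rpow' hp (a := 0) (b := b - s)).comp_sub_right s
  rw [zero_add, sub_add_cancel] at h
  exact h.mul_continuousOn (continuous_pow n).continuousOn

section Competitor

variable {d : ℕ} {m r : ℝ} {x : EuclideanSpace ℝ (Fin d)}

theorem one_lt_rpow_two_sub (hd : 2 < d) (hr0 : 0 < r) (hr1 : r < 1) :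
    1 < r ^ ((2 : ℝ) - d) :=
  Real.one_lt_rpow_of_pos_of_lt_one_of_neg hr0 hr1
    (by linarith [show (2 : ℝ) < d by exact_mod_cast hd])

theorem urad_of_lt (hx : ‖x‖ < r) : urad d m r x = 0 := if_pos hx

theorem gradient_urad_of_lt (hx : ‖x‖ < r) : gradient (urad d m r) x = 0 := by
  have hloc : urad d m r =ᶠ[𝓝 x] fun _ => 0 :=
    eventually_of_mem ((isOpen_lt continuous_norm continuous_const).mem_nhds hx)
      fun _ => urad_of_lt
  rw [hloc.gradient_eq, gradient_fun_const]

theorem urad_pos (hd : 2 < d) (hm : 0 < m) (hr0 : 0 < r) (hr1 : r < 1) (hx : r < ‖x‖) :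
    0 < urad d m r x := by
  have hrx : ‖x‖ ^ ((2 : ℝ) - d) < r ^ ((2 : ℝ) - d) :=
    Real.rpow_lt_rpow_of_neg hr0 hx (by linarith [show (2 : ℝ) < d by exact_mod_cast hd])
  have hA := one_lt_rpow_two_sub hd hr0 hr1
  rw [urad, if_neg hx.not_gt]
  exact div_pos (mul_pos hm (by linarith)) (by linarith)

theorem norm_gradient_urad (hd : 2 < d) (hm : 0 ≤ m) (hr0 : 0 < r) (hr1 : r < 1)
    (hx : r < ‖x‖) :
    ‖gradient (urad d m r) x‖ =
      m * (d - 2) / (r ^ ((2 : ℝ) - d) - 1) * ‖x‖ ^ ((1 : ℝ) - d) := by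
  have hd' : (2 : ℝ) < d := by exact_mod_cast hd
  have hA := one_lt_rpow_two_sub hd hr0 hr1
  have hloc : urad d m r =ᶠ[𝓝 x]
      fun y => m * (r ^ ((2 : ℝ) - d) - ‖y‖ ^ ((2 : ℝ) - d)) / (r ^ ((2 : ℝ) - d) - 1) :=
    eventually_of_mem ((isOpen_lt continuous_const continuous_norm).mem_nhds hx)
      fun y hy => if_neg (not_lt.2 (le_of_lt hy))
  have hρ : 0 < ‖x‖ := hr0.trans hx
  have hderiv : HasDerivAt
      (fun ρ : ℝ => m * (r ^ ((2 : ℝ) - d) - ρ ^ ((2 : ℝ) - d)) / (r ^ ((2 : ℝ) - d) - 1))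
      (m * (d - 2) / (r ^ ((2 : ℝ) - d) - 1) * ‖x‖ ^ ((1 : ℝ) - d)) ‖x‖ := by
    refine ((((hasDerivAt_const _ _).sub (Real.hasDerivAt_rpow_const (Or.inl hρ.ne'))).const_mul
      m).div_const _).congr_deriv ?_
    rw [show (2 : ℝ) - d - 1 = 1 - d by ring]
    ring
  rw [hloc.gradient_eq, norm_gradient_comp_norm (norm_pos_iff.1 hρ) hderiv,
    abs_of_nonneg (by have := sub_pos.2 hA; positivity)]

theorem integral_radial_energy_urad (hd : 2 < d) (hr0 : 0 < r) (hr1 : r < 1) (c : ℝ)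
    {φ : ℝ → ℝ} (hφ : IntervalIntegrable (fun ρ => ρ ^ (d - 1) * φ ρ) volume r 1) :
    ∫ ρ in 0..1,
        ρ ^ (d - 1) * (if ρ ≤ r then 0 else (c * ρ ^ ((1 : ℝ) - d)) ^ 2 + φ ρ) =
      c ^ 2 * (r ^ ((2 : ℝ) - d) - 1) / (d - 2) + ∫ ρ in r..1, ρ ^ (d - 1) * φ ρ := by
  have hd' : (2 : ℝ) < d := by exact_mod_cast hd
  have hinner : EqOn (fun ρ : ℝ => ρ ^ (d - 1) *
      (if ρ ≤ r then 0 else (c * ρ ^ ((1 : ℝ) - d)) ^ 2 + φ ρ)) 0 (Ioo 0 r) := by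
    intro ρ hρ
    simp [hρ.2.le]
  have houter : EqOn (fun ρ : ℝ => c ^ 2 * ρ ^ ((1 : ℝ) - d) + ρ ^ (d - 1) * φ ρ)
      (fun ρ => ρ ^ (d - 1) * (if ρ ≤ r then 0 else (c * ρ ^ ((1 : ℝ) - d)) ^ 2 + φ ρ))
      (Ioo r 1) := by
    rintro ρ ⟨hrρ, -⟩
    have hρ : 0 < ρ := hr0.trans hrρ
    have hpow : ρ ^ (d - 1) * (ρ ^ ((1 : ℝ) - d)) ^ 2 = ρ ^ ((1 : ℝ) - d) := by
      rw [← Real.rpow_natCast, ← Real.rpow_natCast _ 2, ← Real.rpow_mul hρ.le,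
        ← Real.rpow_add hρ, Nat.cast_sub (by omega)]
      congr 1
      push_cast
      ring
    simp only [if_neg hrρ.not_ge]
    linear_combination (-c ^ 2) * hpow
  have hsingular : IntervalIntegrable (fun ρ : ℝ => ρ ^ ((1 : ℝ) - d)) volume r 1 :=
    intervalIntegrable_rpow (Or.inr (by simp [uIcc_of_le hr1.le, hr0.not_ge]))
  rw [← integral_add_adjacent_intervals (IntervalIntegrable.zero.congr_uIoo
      (uIoo_of_le hr0.le ▸ hinner.symm)) ((hsingular.const_mul _).add hφ |>.congr_uIoo
      (uIoo_of_le hr1.le ▸ houter)),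
    integral_congr_Ioo_of_le hr0.le hinner, ← integral_congr_Ioo_of_le hr1.le houter,
    integral_add (hsingular.const_mul _) hφ, intervalIntegral.integral_const_mul,
    integral_rpow (Or.inr ⟨by linarith, by simp [uIcc_of_le hr1.le, hr0.not_ge]⟩)]
  simp only [Pi.zero_apply, intervalIntegral.integral_zero, zero_add, Real.one_rpow]
  rw [show (1 : ℝ) - d + 1 = 2 - d by ring]
  have : (2 : ℝ) - d ≠ 0 := by linarith
  have : (d : ℝ) - 2 ≠ 0 := by linarith
  field_simp
  ring

theorem setIntegral_ball_energy_urad (hd : 2 < d) (hm : 0 < m) (hr0 : 0 < r) (hr1 : r < 1)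
    {φ : ℝ → ℝ} (hφ : IntervalIntegrable (fun ρ => ρ ^ (d - 1) * φ ρ) volume r 1) :
    ∫ x in ball (0 : EuclideanSpace ℝ (Fin d)) 1,
        (‖gradient (urad d m r) x‖ ^ 2 + if 0 < urad d m r x then φ ‖x‖ else 0) =
      d * volume.real (ball (0 : EuclideanSpace ℝ (Fin d)) 1) *
        (m ^ 2 * (d - 2) / (r ^ ((2 : ℝ) - d) - 1) + ∫ ρ in r..1, ρ ^ (d - 1) * φ ρ) := by
  have : Nonempty (Fin d) := ⟨⟨0, by omega⟩⟩
  have hd' : (2 : ℝ) < d := by exact_mod_cast hd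
  have hA := one_lt_rpow_two_sub hd hr0 hr1
  set c := m * (d - 2) / (r ^ ((2 : ℝ) - d) - 1) with hc_def
  have hsphere : ∀ᵐ x ∂(volume : Measure (EuclideanSpace ℝ (Fin d))), ‖x‖ ≠ r := by
    filter_upwards [measure_eq_zero_iff_ae_notMem.1 (Measure.addHaar_sphere volume 0 r)]
      with x hx using fun h => hx (mem_sphere_zero_iff_norm.2 h)
  have hdensity : ∀ᵐ x ∂(volume : Measure (EuclideanSpace ℝ (Fin d))), x ∈ ball 0 1 →
      ‖gradient (urad d m r) x‖ ^ 2 + (if 0 < urad d m r x then φ ‖x‖ else 0) =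
        if ‖x‖ ≤ r then 0 else (c * ‖x‖ ^ ((1 : ℝ) - d)) ^ 2 + φ ‖x‖ := by
    filter_upwards [hsphere] with x hx _
    rcases hx.lt_or_gt with h | h
    · simp [gradient_urad_of_lt h, urad_of_lt h, h.le]
    · simp [norm_gradient_urad hd hm.le hr0 hr1 h, urad_pos hd hm hr0 hr1 h, h.not_ge, c]
  rw [setIntegral_congr_ae measurableSet_ball hdensity,
    setIntegral_ball_fun_norm_addHaar _ (fun ρ => if ρ ≤ r then 0 else
      (c * ρ ^ ((1 : ℝ) - d)) ^ 2 + φ ρ) zero_le_one,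
    finrank_euclideanSpace_fin]
  simp only [nsmul_eq_mul, smul_eq_mul]
  have hc : c ^ 2 * (r ^ ((2 : ℝ) - d) - 1) / (d - 2) =
      m ^ 2 * (d - 2) / (r ^ ((2 : ℝ) - d) - 1) := by
    have : r ^ ((2 : ℝ) - d) - 1 ≠ 0 := by linarith
    have : (d : ℝ) - 2 ≠ 0 := by linarith
    rw [hc_def]
    field_simp
  rw [integral_radial_energy_urad hd hr0 hr1 c hφ, hc, mul_assoc]

theorem setIntegral_ball_energy_const (hd : 0 < d) (hm : 0 < m) (φ : ℝ → ℝ) :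
    ∫ x in ball (0 : EuclideanSpace ℝ (Fin d)) 1,
        (‖gradient (fun _ : EuclideanSpace ℝ (Fin d) => m) x‖ ^ 2 +
          if 0 < m then φ ‖x‖ else 0) =
      d * volume.real (ball (0 : EuclideanSpace ℝ (Fin d)) 1) *
        ∫ ρ in 0..1, ρ ^ (d - 1) * φ ρ := by
  have : Nonempty (Fin d) := ⟨⟨0, hd⟩⟩
  simp only [gradient_fun_const, norm_zero, if_pos hm, zero_pow two_ne_zero, zero_add]
  rw [setIntegral_ball_fun_norm_addHaar _ φ zero_le_one, finrank_euclideanSpace_fin]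
  simp only [nsmul_eq_mul, smul_eq_mul, mul_assoc]

end Competitor

section Profile

variable {d : ℕ} {q m ρ : ℝ}

theorem rStar_pos (hd : 2 < d) : 0 < rStar d := by
  have hd' : (2 : ℝ) < d := by exact_mod_cast hd
  exact Real.rpow_pos_of_pos (inv_pos.2 (by linarith)) _

theorem rStar_lt_one (hd : 2 < d) : rStar d < 1 := by
  have hd' : (2 : ℝ) < d := by exact_mod_cast hd
  exact Real.rpow_lt_one (inv_pos.2 (by linarith)).le (inv_lt_one_of_one_lt₀ (by linarith))
    (inv_pos.2 (by linarith))

theorem rStar_lt_rStarUp (hd : 2 < d) : rStar d < rStarUp d := by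
  rw [rStarUp]; linarith [rStar_lt_one hd]

theorem rStarUp_lt_one (hd : 2 < d) : rStarUp d < 1 := by
  rw [rStarUp]; linarith [rStar_lt_one hd]

theorem phiRad_of_lt_rStar (h : ρ < rStar d) : phiRad d q m ρ = (m * rStar d ^ (d - 1)) ^ 2 :=
  if_pos h

theorem phiRad_of_mem_Ico (h : ρ ∈ Ico (rStar d) (rStarUp d)) :
    phiRad d q m ρ = (ρ - rStar d) ^ (-(1 : ℝ) / q) := by
  rw [phiRad, if_neg h.1.not_gt, if_pos h.2]

theorem phiRad_of_rStarUp_le (hd : 2 < d) (h : rStarUp d ≤ ρ) :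
    phiRad d q m ρ = (m * rStar d ^ (d - 1)) ^ 2 := by
  rw [phiRad, if_neg ((rStar_lt_rStarUp hd).trans_le h).not_gt, if_neg h.not_gt]

theorem phiRad_nonneg : 0 ≤ phiRad d q m ρ := by
  unfold phiRad
  split_ifs <;> first | positivity | exact Real.rpow_nonneg (by linarith) _

theorem intervalIntegrable_pow_mul_phiRad (hd : 2 < d) (hq : 1 < q) :
    IntervalIntegrable (fun ρ => ρ ^ (d - 1) * phiRad d q m ρ) volume 0 1 := by
  have hs := rStar_pos hd
  have hsr := rStar_lt_rStarUp hd
  have hr1 := rStarUp_lt_one hd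
  have hconst : ∀ a b : ℝ, IntervalIntegrable
      (fun ρ : ℝ => ρ ^ (d - 1) * (m * rStar d ^ (d - 1)) ^ 2) volume a b :=
    fun _ _ => (by fun_prop : Continuous _).intervalIntegrable _ _
  have hexp : -1 < -(1 : ℝ) / q := by
    rw [neg_div, neg_lt_neg_iff, div_lt_one (by linarith)]; exact hq
  refine ((hconst 0 (rStar d)).congr_uIoo ?_).trans
    ((((intervalIntegrable_sub_rpow_mul_pow hexp _ (rStarUp d) (d - 1))).congr_uIoo ?_).trans
      ((hconst (rStarUp d) 1).congr_uIoo ?_))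
  · rw [uIoo_of_le hs.le]
    intro ρ hρ
    simp only [phiRad_of_lt_rStar hρ.2]
  · rw [uIoo_of_le hsr.le]
    intro ρ hρ
    simp only [phiRad_of_mem_Ico ⟨hρ.1.le, hρ.2⟩, mul_comm]
  · rw [uIoo_of_le hr1.le]
    intro ρ hρ
    simp only [phiRad_of_rStarUp_le hd hρ.1.le]

theorem integral_sub_rpow_mul_pow_le_integral_pow_mul_phiRad (hd : 2 < d) (hq : 1 < q) :
    ∫ ρ in rStar d..rStarUp d, (ρ - rStar d) ^ (-(1 : ℝ) / q) * ρ ^ (d - 1) ≤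
      ∫ ρ in 0..rStarUp d, ρ ^ (d - 1) * phiRad d q m ρ := by
  have hsr := rStar_lt_rStarUp hd
  have hsingular : EqOn (fun ρ : ℝ => (ρ - rStar d) ^ (-(1 : ℝ) / q) * ρ ^ (d - 1))
      (fun ρ => ρ ^ (d - 1) * phiRad d q m ρ) (Ioo (rStar d) (rStarUp d)) := by
    intro ρ hρ
    simp only [phiRad_of_mem_Ico ⟨hρ.1.le, hρ.2⟩, mul_comm]
  rw [integral_congr_Ioo_of_le hsr.le hsingular]
  refine integral_mono_interval (rStar_pos hd).le hsr.le le_rfl ?_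
    ((intervalIntegrable_pow_mul_phiRad hd hq).mono_set ?_)
  · filter_upwards [ae_restrict_mem measurableSet_Ioc] with ρ hρ
    exact mul_nonneg (pow_nonneg hρ.1.le _) phiRad_nonneg
  · exact uIcc_subset_uIcc left_mem_uIcc (mem_uIcc_of_le ((rStar_pos hd).trans hsr).le
      (rStarUp_lt_one hd).le)

end Profile

/-- **Small-`m` energy comparison.** For `d ≥ 3`, `q > 1`, if
`m² < ((r^*)^{2-d} - 1)/(d-2) · ∫_{r_*}^{r^*} (ρ - r_*)^{-1/q} ρ^{d-1} dρ`, then the radial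
competitor `u_{r^*}` has strictly smaller energy
`J(v) = ∫_{B₁} (|∇v|² + φ · 1_{v>0})` than the constant function `m`. -/
theorem stmt17 (d : ℕ) (hd : 3 ≤ d) (q m : ℝ) (hq : 1 < q) (hm : 0 < m)
    (hsmall : m ^ 2 < ((rStarUp d ^ ((2 : ℝ) - d) - 1) / ((d : ℝ) - 2)) *
      ∫ ρ in rStar d..rStarUp d, (ρ - rStar d) ^ (-(1 : ℝ) / q) * ρ ^ (d - 1)) :
    (∫ x in ball (0 : EuclideanSpace ℝ (Fin d)) 1,
        (‖gradient (urad d m (rStarUp d)) x‖ ^ 2 +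
          (if 0 < urad d m (rStarUp d) x then phiRad d q m ‖x‖ else 0))) <
      ∫ x in ball (0 : EuclideanSpace ℝ (Fin d)) 1,
        (‖gradient (fun _ : EuclideanSpace ℝ (Fin d) => m) x‖ ^ 2 +
          (if 0 < m then phiRad d q m ‖x‖ else 0)) := by
  have hd' : 2 < d := by omega
  have hdR : (2 : ℝ) < d := by exact_mod_cast hd'
  have hr0 : 0 < rStarUp d := (rStar_pos hd').trans (rStar_lt_rStarUp hd')
  have hr1 := rStarUp_lt_one hd'
  have hA := sub_pos.2 (one_lt_rpow_two_sub hd' hr0 hr1)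
  have hF := intervalIntegrable_pow_mul_phiRad (m := m) hd' hq
  have hr : rStarUp d ∈ uIcc (0 : ℝ) 1 := mem_uIcc_of_le hr0.le hr1.le
  have hF₀ := hF.mono_set (uIcc_subset_uIcc left_mem_uIcc hr)
  have hF₁ := hF.mono_set (uIcc_subset_uIcc hr right_mem_uIcc)
  have hgap : m ^ 2 * (d - 2) / (rStarUp d ^ ((2 : ℝ) - d) - 1) <
      ∫ ρ in 0..rStarUp d, ρ ^ (d - 1) * phiRad d q m ρ := by
    refine lt_of_lt_of_le ?_ (integral_sub_rpow_mul_pow_le_integral_pow_mul_phiRad hd' hq)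
    rw [div_mul_eq_mul_div, lt_div_iff₀ (sub_pos.2 hdR)] at hsmall
    rw [div_lt_iff₀ hA]
    linarith
  have hvol : 0 < (d : ℝ) * volume.real (ball (0 : EuclideanSpace ℝ (Fin d)) 1) := by
    have : Nonempty (Fin d) := ⟨⟨0, by omega⟩⟩
    exact mul_pos (by positivity)
      (ENNReal.toReal_pos (measure_ball_pos volume 0 one_pos).ne' measure_ball_lt_top.ne)
  rw [setIntegral_ball_energy_urad hd' hm hr0 hr1 hF₁,
    setIntegral_ball_energy_const (by omega) hm,
    ← integral_add_adjacent_intervals hF₀ hF₁]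
  exact mul_lt_mul_of_pos_left (by linarith) hvol
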